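/- Let f : ℝᴰ → ℝ be twice differentiable and nonnegative, with ‖∇²f(θ)‖_{p→q} ≤ H₀ + H₁·f(θ) for all θ (H₀ ≥ 0, H₁ > 0, 1/p + 1/q = 1). Then for all x, y: f(y) + H₀/H₁ ≤ (f(x) + H₀/H₁)·exp(√H₁·‖y − x‖_p). -/

import Mathlib

open scoped BigOperators

noncomputable def lpNorm (p : ENNReal) {ι : Type*} [Fintype ι] (x : ι → ℝ) : ℝ :=
  ‖(WithLp.equiv p (ι → ℝ)).symm x‖

noncomputable def opNorm (p q : ENNReal) {ι κ : Type*} [Fintype ι] [Fintype κ]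
    (A : Matrix ι κ ℝ) : ℝ :=
  sSup {c | ∃ x : κ → ℝ, lpNorm p x ≤ 1 ∧ c = lpNorm q (A.mulVec x)}

noncomputable def dotCLM {n : ℕ} (v : Fin n → ℝ) : (Fin n → ℝ) →L[ℝ] ℝ :=
  LinearMap.toContinuousLinearMap (∑ i, v i • (LinearMap.proj i : (Fin n → ℝ) →ₗ[ℝ] ℝ))

noncomputable def mulVecCLM {m n : ℕ} (M : Matrix (Fin m) (Fin n) ℝ) :
    (Fin n → ℝ) →L[ℝ] (Fin m → ℝ) :=
  LinearMap.toContinuousLinearMap M.mulVecLin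

/-!
Along the segment `θ t = x + t • (y - x)` the function `φ t = f (θ t) + H0 / H1` is nonnegative
and, by Hölder's inequality and the Hessian bound, satisfies `φ'' ≤ c ^ 2 * φ` with
`c = √H1 * ‖y - x‖_p`. A function that is nonnegative on the whole line and satisfies this
inequality obeys `φ' ≤ c * φ`: otherwise `ψ = φ' - c * φ`, which satisfies `ψ' ≤ -c * ψ`, stays
above a positive constant to the left of a point where it is positive, and then `φ' ≥ ψ` drives `φ`
below zero. Grönwall's inequality for `φ' ≤ c * φ` gives `φ 1 ≤ φ 0 * exp c`.
-/

open Real Matrix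

section Norms

variable {ι κ : Type*} [Fintype ι] [Fintype κ]

theorem abs_le_lpNorm (p : ENNReal) [Fact (1 ≤ p)] (x : ι → ℝ) (i : ι) : |x i| ≤ lpNorm p x :=
  PiLp.norm_apply_le (WithLp.toLp p x) i

theorem lpNorm_one (x : ι → ℝ) : lpNorm 1 x = ∑ i, |x i| := by
  simp [lpNorm, PiLp.norm_eq_of_L1]

theorem lpNorm_nonneg (p : ENNReal) [Fact (1 ≤ p)] (x : ι → ℝ) : 0 ≤ lpNorm p x :=
  norm_nonneg _

theorem dotProduct_le_lpNorm_top_mul_lpNorm_one (u w : ι → ℝ) :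
    u ⬝ᵥ w ≤ lpNorm ⊤ u * lpNorm 1 w := by
  rw [lpNorm_one, Finset.mul_sum]
  refine Finset.sum_le_sum fun i _ => ?_
  calc u i * w i ≤ |u i| * |w i| := by rw [← abs_mul]; exact le_abs_self _
    _ ≤ lpNorm ⊤ u * |w i| := by gcongr; exact abs_le_lpNorm ⊤ u i

theorem dotProduct_le_lpNorm_mul_lpNorm {p q : ENNReal} [p.HolderConjugate q] (u w : ι → ℝ) :
    u ⬝ᵥ w ≤ lpNorm p u * lpNorm q w := by
  rcases eq_or_ne p ⊤ with rfl | hp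
  · obtain rfl : q = 1 := (ENNReal.HolderConjugate.eq_top_iff_eq_one ⊤ q).1 rfl
    exact dotProduct_le_lpNorm_top_mul_lpNorm_one u w
  rcases eq_or_ne q ⊤ with rfl | hq
  · obtain rfl : p = 1 := (ENNReal.HolderConjugate.eq_top_iff_eq_one ⊤ p).1 rfl
    rw [dotProduct_comm, mul_comm]
    exact dotProduct_le_lpNorm_top_mul_lpNorm_one w u
  have hpq := ENNReal.HolderConjugate.toReal_of_ne_top hp hq
  simpa [dotProduct, lpNorm, PiLp.norm_eq_sum, hpq.pos, hpq.symm.pos] using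
    Real.inner_le_Lp_mul_Lq Finset.univ u w hpq

theorem opNorm_eq_norm_toLpLin (p q : ENNReal) [Fact (1 ≤ p)] [Fact (1 ≤ q)] [DecidableEq κ]
    (A : Matrix ι κ ℝ) : opNorm p q A = ‖LinearMap.toContinuousLinearMap (A.toLpLin p q)‖ := by
  rw [← ContinuousLinearMap.sSup_unitClosedBall_eq_norm, opNorm]
  congr 1
  ext c
  constructor
  · rintro ⟨x, hx, rfl⟩
    exact ⟨WithLp.toLp p x, by simpa [lpNorm] using hx, rfl⟩
  · rintro ⟨x, hx, rfl⟩
    exact ⟨x.ofLp, by simpa [lpNorm] using hx, rfl⟩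

theorem lpNorm_mulVec_le_opNorm_mul (p q : ENNReal) [Fact (1 ≤ p)] [Fact (1 ≤ q)]
    (A : Matrix ι κ ℝ) (x : κ → ℝ) : lpNorm q (A *ᵥ x) ≤ opNorm p q A * lpNorm p x := by
  classical
  rw [opNorm_eq_norm_toLpLin]
  exact (LinearMap.toContinuousLinearMap (A.toLpLin p q)).le_opNorm (WithLp.toLp p x)

theorem dotProduct_mulVec_le_opNorm_mul_sq {p q : ENNReal} [p.HolderConjugate q]
    (A : Matrix κ κ ℝ) (v : κ → ℝ) : v ⬝ᵥ (A *ᵥ v) ≤ opNorm p q A * lpNorm p v ^ 2 := by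
  have : Fact (1 ≤ p) := ⟨ENNReal.HolderConjugate.one_le p q⟩
  have : Fact (1 ≤ q) := ⟨ENNReal.HolderConjugate.one_le q p⟩
  calc v ⬝ᵥ (A *ᵥ v) ≤ lpNorm p v * lpNorm q (A *ᵥ v) := dotProduct_le_lpNorm_mul_lpNorm v _
    _ ≤ lpNorm p v * (opNorm p q A * lpNorm p v) := by
      gcongr
      · exact lpNorm_nonneg p v
      · exact lpNorm_mulVec_le_opNorm_mul p q A v
    _ = opNorm p q A * lpNorm p v ^ 2 := by ring

end Norms

section Gronwall

variable {u u' : ℝ → ℝ} {a : ℝ}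

theorem antitone_mul_exp_neg_of_deriv_le (hu : ∀ t, HasDerivAt u (u' t) t)
    (h : ∀ t, u' t ≤ a * u t) : Antitone fun t => u t * exp (-(a * t)) := by
  have hd : ∀ t, HasDerivAt (fun t => u t * exp (-(a * t)))
      ((u' t - a * u t) * exp (-(a * t))) t := fun t => by
    have he : HasDerivAt (fun t => exp (-(a * t))) (exp (-(a * t)) * -a) t := by
      simpa using ((hasDerivAt_id t).const_mul a).neg.exp
    exact ((hu t).mul he).congr_deriv (by ring)
  refine antitone_of_deriv_nonpos (fun t => (hd t).differentiableAt) fun t => ?_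
  rw [(hd t).deriv]
  exact mul_nonpos_of_nonpos_of_nonneg (by linarith [h t]) (exp_pos _).le

theorem le_mul_exp_of_deriv_le (hu : ∀ t, HasDerivAt u (u' t) t) (h : ∀ t, u' t ≤ a * u t)
    {s t : ℝ} (hst : s ≤ t) : u t ≤ u s * exp (a * (t - s)) := by
  have := mul_le_mul_of_nonneg_right (antitone_mul_exp_neg_of_deriv_le hu h hst)
    (exp_pos (a * t)).le
  calc u t = u t * exp (-(a * t)) * exp (a * t) := by rw [mul_assoc, ← exp_add]; simp
    _ ≤ u s * exp (-(a * s)) * exp (a * t) := this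
    _ = u s * exp (a * (t - s)) := by rw [mul_assoc, ← exp_add]; ring_nf

end Gronwall

section SecondOrder

variable {φ φ' φ'' : ℝ → ℝ} {c : ℝ}

theorem deriv_le_mul_of_second_deriv_le (hc : 0 ≤ c) (h1 : ∀ t, HasDerivAt φ (φ' t) t)
    (h2 : ∀ t, HasDerivAt φ' (φ'' t) t) (hφ : ∀ t, 0 ≤ φ t) (hb : ∀ t, φ'' t ≤ c ^ 2 * φ t)
    (s : ℝ) : φ' s ≤ c * φ s := by
  by_contra! hs
  set B := φ' s - c * φ s
  have hB : 0 < B := sub_pos.2 hs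
  have hψ : ∀ t ≤ s, B ≤ φ' t - c * φ t := fun t ht => by
    have hgrow := le_mul_exp_of_deriv_le (u := fun t => φ' t - c * φ t) (a := -c)
      (fun t => (h2 t).sub ((h1 t).const_mul c)) (fun t => by nlinarith [hb t]) ht
    have hE : exp (-c * (s - t)) ≤ 1 := exp_le_one_iff.2 (by nlinarith)
    nlinarith [exp_pos (-c * (s - t))]
  have hslope : ∀ t ≤ s, B ≤ φ' t := fun t ht => by
    nlinarith [hψ t ht, mul_nonneg hc (hφ t)]
  have hmvt := (convex_Iic s).mul_sub_le_image_sub_of_le_deriv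
    (fun t _ => (h1 t).continuousAt.continuousWithinAt)
    (fun t _ => (h1 t).differentiableAt.differentiableWithinAt)
    (fun r hr => (h1 r).deriv ▸ hslope r (Set.mem_Iic.1 (interior_subset hr)))
  set t := s - φ s / B - 1
  have ht : t ≤ s := by have := div_nonneg (hφ s) hB.le; linarith
  have := hmvt t ht s (Set.mem_Iic.2 le_rfl) ht
  have hBt : B * (s - t) = φ s + B := by simp only [t]; field_simp; ring
  linarith [hφ t]

theorem le_mul_exp_of_second_deriv_le (hc : 0 ≤ c) (h1 : ∀ t, HasDerivAt φ (φ' t) t)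
    (h2 : ∀ t, HasDerivAt φ' (φ'' t) t) (hφ : ∀ t, 0 ≤ φ t) (hb : ∀ t, φ'' t ≤ c ^ 2 * φ t)
    {s t : ℝ} (hst : s ≤ t) : φ t ≤ φ s * exp (c * (t - s)) :=
  le_mul_exp_of_deriv_le h1 (deriv_le_mul_of_second_deriv_le hc h1 h2 hφ hb) hst

end SecondOrder

theorem HasFDerivAt.hasDerivAt_add_smul {E F : Type*} [NormedAddCommGroup E] [NormedSpace ℝ E]
    [NormedAddCommGroup F] [NormedSpace ℝ F] {f : E → F} {f' : E →L[ℝ] F} {x v : E} {t : ℝ}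
    (hf : HasFDerivAt f f' (x + t • v)) : HasDerivAt (fun t : ℝ => f (x + t • v)) (f' v) t := by
  have hline : HasDerivAt (fun t : ℝ => x + t • v) v t := by
    simpa using ((hasDerivAt_id t).smul_const v).const_add x
  exact hf.comp_hasDerivAt t hline

theorem dotCLM_apply {n : ℕ} (v w : Fin n → ℝ) : dotCLM v w = v ⬝ᵥ w := by
  simp [dotCLM, dotProduct]

theorem stmt3_general {D : ℕ} (p q : ENNReal) (hpq : 1/p + 1/q = 1)
    (f : (Fin D → ℝ) → ℝ) (g : (Fin D → ℝ) → (Fin D → ℝ))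
    (Hess : (Fin D → ℝ) → Matrix (Fin D) (Fin D) ℝ)
    (hfnn : ∀ θ, 0 ≤ f θ)
    (hgrad : ∀ θ, HasFDerivAt f (dotCLM (g θ)) θ)
    (hhess : ∀ θ, HasFDerivAt g (mulVecCLM (Hess θ)) θ)
    (H0 H1 : ℝ) (hH0 : 0 ≤ H0) (hH1 : 0 < H1)
    (hnus : ∀ θ, opNorm p q (Hess θ) ≤ H0 + H1 * f θ) :
    ∀ x y, f y + H0 / H1 ≤ (f x + H0 / H1) * Real.exp (Real.sqrt H1 * lpNorm p (y - x)) := by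
  intro x y
  have : p.HolderConjugate q := ENNReal.holderConjugate_iff.2 (by simpa only [one_div] using hpq)
  have : Fact (1 ≤ p) := ⟨ENNReal.HolderConjugate.one_le p q⟩
  set v := y - x
  set c := √H1 * lpNorm p v
  have hφ' : ∀ t : ℝ,
      HasDerivAt (fun t => f (x + t • v) + H0 / H1) (v ⬝ᵥ g (x + t • v)) t := fun t => by
    simpa [dotCLM_apply, dotProduct_comm] using
      ((hgrad (x + t • v)).hasDerivAt_add_smul (x := x)).add_const (H0 / H1)
  have hφ'' : ∀ t : ℝ,
      HasDerivAt (fun t => v ⬝ᵥ g (x + t • v)) (v ⬝ᵥ (Hess (x + t • v) *ᵥ v)) t := fun t => by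
    simpa [Function.comp_def, dotCLM_apply, mulVecCLM] using
      (dotCLM v).hasFDerivAt.comp_hasDerivAt t ((hhess (x + t • v)).hasDerivAt_add_smul (x := x))
  have hcurv : ∀ t : ℝ, v ⬝ᵥ (Hess (x + t • v) *ᵥ v) ≤ c ^ 2 * (f (x + t • v) + H0 / H1) :=
    fun t => calc
      _ ≤ opNorm p q (Hess (x + t • v)) * lpNorm p v ^ 2 := dotProduct_mulVec_le_opNorm_mul_sq _ v
      _ ≤ (H0 + H1 * f (x + t • v)) * lpNorm p v ^ 2 := by gcongr; exact hnus _
      _ = c ^ 2 * (f (x + t • v) + H0 / H1) := by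
        simp only [c, mul_pow, Real.sq_sqrt hH1.le]; field_simp; ring
  have hc : 0 ≤ c := mul_nonneg (Real.sqrt_nonneg _) (lpNorm_nonneg ..)
  have hnn : ∀ t : ℝ, 0 ≤ f (x + t • v) + H0 / H1 := fun t => by
    have := hfnn (x + t • v); positivity
  simpa [v] using le_mul_exp_of_second_deriv_le hc hφ' hφ'' hnn hcurv zero_le_one

theorem stmt3 {D : ℕ} (p q : ENNReal) (hp : 1 ≤ p) (hq : 1 ≤ q) (hpq : 1/p + 1/q = 1)
    (f : (Fin D → ℝ) → ℝ) (g : (Fin D → ℝ) → (Fin D → ℝ))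
    (Hess : (Fin D → ℝ) → Matrix (Fin D) (Fin D) ℝ)
    (hfnn : ∀ θ, 0 ≤ f θ)
    (hgrad : ∀ θ, HasFDerivAt f (dotCLM (g θ)) θ)
    (hhess : ∀ θ, HasFDerivAt g (mulVecCLM (Hess θ)) θ)
    (H0 H1 : ℝ) (hH0 : 0 ≤ H0) (hH1 : 0 < H1)
    (hnus : ∀ θ, opNorm p q (Hess θ) ≤ H0 + H1 * f θ) :
    ∀ x y, f y + H0 / H1 ≤ (f x + H0 / H1) * Real.exp (Real.sqrt H1 * lpNorm p (y - x)) :=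
  stmt3_general p q hpq f g Hess hfnn hgrad hhess H0 H1 hH0 hH1 hnus
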